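/- arXiv:2506.22061 — 2 statements merged into one kernel-verified Lean document; each statement's English description precedes it below -/
import Mathlib

section
/- Let α and β be primitive words with |α| ≠ |β|, and let u = α^M, v = β^N for some M, N ∈ ℕ. If u and v, placed as factors of two words at given positions, have an overlap of size at least |α| + |β| − gcd(|α|, |β|), then the overlap contains a conflict, i.e., the overlapping segments of u and v disagree at some position. -/
/-- `wpow w n` is the `n`-fold concatenation (iteration) of the word `w`. -/
def wpow {A : Type*} (w : List A) : ℕ → List A
  | 0 => []
  | n + 1 => w ++ wpow w n

/-- A word is primitive if it cannot be written as `v ^ k` for any `k ≥ 2`. -/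
def Primitive {A : Type*} (w : List A) : Prop :=
  ∀ (v : List A) (k : ℕ), 2 ≤ k → w ≠ wpow v k

/-!
If there were no conflict, the common factor `v` of `α ^ M` and `β ^ N` would have the periods
`|α|` and `|β|`, hence by the Fine–Wilf periodicity lemma the period `g = gcd |α| |β|`, which is
smaller than `|α|` or `|β|`, say than `|α|`. Since `|v| ≥ |α|` and `g ∣ |α|`, the period `g`
propagates from `v` to the infinite power `α α α ⋯`, making `α` the power
`(α.take g) ^ (|α| / g)` with exponent at least `2`.
-/

open Function

section

variable {A B : Type*}

lemma length_wpow (w : List A) (n : ℕ) : (wpow w n).length = n * w.length := by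
  induction n with
  | zero => simp [wpow]
  | succ n ih => simp only [wpow, List.length_append, ih, Nat.succ_mul, Nat.add_comm]

lemma getElem?_wpow (w : List A) {n j : ℕ} (h : j < n * w.length) :
    (wpow w n)[j]? = w[j % w.length]? := by
  induction n generalizing j with
  | zero => omega
  | succ n ih =>
    rcases lt_or_ge j w.length with hj | hj
    · rw [wpow, List.getElem?_append_left hj, Nat.mod_eq_of_lt hj]
    · rw [wpow, List.getElem?_append_right hj, ih (by rw [Nat.succ_mul] at h; omega),
        Nat.mod_eq_sub_mod hj]

lemma getElem?_append_wpow_append (p w s : List A) {n j : ℕ} (h₁ : p.length ≤ j)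
    (h₂ : j < p.length + n * w.length) :
    (p ++ wpow w n ++ s)[j]? = w[(j - p.length) % w.length]? := by
  rw [List.getElem?_append_left (by rw [List.length_append, length_wpow]; omega),
    List.getElem?_append_right h₁, getElem?_wpow w (by omega)]

lemma periodic_getElem?_mod (w : List A) : Periodic (fun i => w[i % w.length]?) w.length :=
  fun i => by simp only [Nat.add_mod_right]

lemma Primitive.length_pos {w : List A} (hw : Primitive w) : 0 < w.length :=
  List.length_pos_iff.mpr fun h => hw [] 2 le_rfl (by rw [h]; rfl)

lemma eq_wpow_take_of_periodic {w : List A} {g : ℕ} (hg₀ : 0 < g) (hg : g ∣ w.length)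
    (h : Periodic (fun i => w[i % w.length]?) g) : w = wpow (w.take g) (w.length / g) := by
  rcases Nat.eq_zero_or_pos w.length with hw | hw
  · simp [List.length_eq_zero_iff.mp hw, wpow]
  have hgw : g ≤ w.length := Nat.le_of_dvd hw hg
  have hlen : (w.take g).length = g := List.length_take_of_le hgw
  apply List.ext_getElem?
  intro j
  rcases lt_or_ge j w.length with hj | hj
  · rw [getElem?_wpow _ (by rw [hlen, Nat.div_mul_cancel hg]; exact hj), hlen,
      List.getElem?_take_of_lt (Nat.mod_lt _ hg₀)]
    have := h.map_mod_nat j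
    simp only [Nat.mod_eq_of_lt hj, Nat.mod_eq_of_lt ((Nat.mod_lt j hg₀).trans_le hgw)] at this
    exact this.symm
  · rw [List.getElem?_eq_none hj, List.getElem?_eq_none]
    rwa [length_wpow, hlen, Nat.div_mul_cancel hg]

lemma Primitive.not_periodic {w : List A} (hw : Primitive w) {g : ℕ} (hg : g ∣ w.length)
    (hgw : g < w.length) : ¬ Periodic (fun i => w[i % w.length]?) g := by
  intro h
  have hg₀ : 0 < g := Nat.pos_of_dvd_of_pos hg hw.length_pos
  refine hw _ _ ?_ (eq_wpow_take_of_periodic hg₀ hg h)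
  obtain ⟨c, hc⟩ := hg
  rw [hc, Nat.mul_div_cancel_left c hg₀]
  by_contra! hc2
  interval_cases c <;> omega

lemma Function.Periodic.of_periodic_add_left {F : ℕ → B} {a g : ℕ} (hF : Periodic F a)
    (ha : 0 < a) (t : ℕ) (hG : Periodic (fun i => F (t + i)) g) : Periodic F g := by
  intro x
  have ht : t ≤ t * a := Nat.le_mul_of_pos_right t ha
  have hFt : Periodic F (t * a) := by simpa using hF.nat_mul t
  have key := hG (x + t * a - t)
  simp only at key
  rwa [← Nat.add_assoc, Nat.add_sub_cancel' (by omega), Nat.add_right_comm, hFt, hFt] at key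

lemma Nat.card_Icc_inter_Icc (a b c d : ℕ) :
    (Finset.Icc a b ∩ Finset.Icc c d).card = min b d + 1 - max a c := by
  have : Finset.Icc a b ∩ Finset.Icc c d = Finset.Icc (max a c) (min b d) := by
    ext x
    simp only [Finset.mem_inter, Finset.mem_Icc]
    omega
  rw [this, Nat.card_Icc]

lemma List.hasPeriod_of_getElem?_eq {v : List B} {F : ℕ → Option B} {a t : ℕ}
    (hF : Periodic F a) (hv : ∀ i < v.length, v[i]? = F (t + i)) : v.HasPeriod a :=
  List.hasPeriod_iff_getElem?.mpr fun i hi => by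
    rw [hv i (by omega), hv (i + a) (by omega), ← Nat.add_assoc, hF]

lemma List.HasPeriod.periodic_of_getElem?_eq {v : List B} {F : ℕ → Option B} {a g t : ℕ}
    (hper : v.HasPeriod g) (hF : Periodic F a) (ha : 0 < a) (hg : g ∣ a) (hlen : a ≤ v.length)
    (hv : ∀ i < v.length, v[i]? = F (t + i)) : Periodic F g := by
  have hGa : Periodic (fun i => F (t + i)) a := fun i => by simp only [← Nat.add_assoc]; exact hF _
  have hG : ∀ i, F (t + i) = v[i % g]? := fun i => by
    rw [← hGa.map_mod_nat i, ← hv _ ((Nat.mod_lt i ha).trans_le hlen),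
      List.hasPeriod_iff_forall_getElem?_mod.mp hper _ ((Nat.mod_lt i ha).trans_le hlen),
      Nat.mod_mod_of_dvd i hg]
  exact hF.of_periodic_add_left ha t fun i => by simp only [hG, Nat.add_mod_right]

lemma Primitive.not_hasPeriod {w v : List A} (hw : Primitive w) {g t : ℕ}
    (hv : ∀ i < v.length, v[i]? = w[(t + i) % w.length]?) (hlen : w.length ≤ v.length)
    (hg : g ∣ w.length) (hgw : g < w.length) : ¬ v.HasPeriod g := fun hper =>
  hw.not_periodic hg hgw
    (hper.periodic_of_getElem?_eq (periodic_getElem?_mod w) hw.length_pos hg hlen hv)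

end

/-- Any overlap of size at least `|α| + |β| - gcd (|α|, |β|)` between factors
`u = α ^ M` and `v = β ^ N` of two words, for primitive `α, β` of distinct
lengths, contains a conflict: a common position where the two words disagree. -/
theorem overlap_conflict {A : Type*} (α β : List A) (M N : ℕ)
    (hα : Primitive α) (hβ : Primitive β) (hlen : α.length ≠ β.length)
    (p s p' s' : List A)
    (hoverlap : α.length + β.length - Nat.gcd α.length β.length ≤
      ((Finset.Icc (p.length + 1) (p.length + (wpow α M).length)) ∩
       (Finset.Icc (p'.length + 1) (p'.length + (wpow β N).length))).card) :
    ∃ i : ℕ, p.length ≤ i ∧ i < p.length + (wpow α M).length ∧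
      p'.length ≤ i ∧ i < p'.length + (wpow β N).length ∧
      (p ++ wpow α M ++ s)[i]? ≠ (p' ++ wpow β N ++ s')[i]? := by
  by_contra! hcon
  rw [Nat.card_Icc_inter_Icc, length_wpow, length_wpow] at hoverlap
  rw [length_wpow, length_wpow] at hcon
  set m := max p.length p'.length with hm
  set n := min (p.length + M * α.length) (p'.length + N * β.length) - m with hn
  set v := ((p ++ wpow α M ++ s).drop m).take n
  have hvlen : v.length = n := by
    simp only [v, List.length_take, List.length_drop, List.length_append, length_wpow]
    omega
  have hvα : ∀ i < v.length, v[i]? = α[(m - p.length + i) % α.length]? := fun i hi => by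
    rw [List.getElem?_take_of_lt (by omega), List.getElem?_drop,
      getElem?_append_wpow_append p α s (by omega) (by omega)]
    congr 2; omega
  have hvβ : ∀ i < v.length, v[i]? = β[(m - p'.length + i) % β.length]? := fun i hi => by
    rw [List.getElem?_take_of_lt (by omega), List.getElem?_drop, hcon (m + i) (by omega)
      (by omega) (by omega) (by omega), getElem?_append_wpow_append p' β s' (by omega) (by omega)]
    congr 2; omega
  have hper := (List.hasPeriod_of_getElem?_eq (periodic_getElem?_mod α) hvα).gcd
    (List.hasPeriod_of_getElem?_eq (periodic_getElem?_mod β) hvβ) (by omega)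
  have hgβ : Nat.gcd α.length β.length ≤ β.length := Nat.gcd_le_right _ hβ.length_pos
  rcases (Nat.gcd_le_left β.length hα.length_pos).lt_or_eq with hgα | hgα
  · exact hα.not_hasPeriod hvα (by omega) (Nat.gcd_dvd_left _ _) hgα hper
  · exact hβ.not_hasPeriod hvβ (by omega) (Nat.gcd_dvd_right _ _)
      (hgβ.lt_of_ne fun h => hlen (hgα.symm.trans h)) hper
end

section
/- Let γ = α^r β^r α^r β^r α^{2r} β^{2r} where α, β are primitive words of equal length m = |α| = |β| with α ≠ β, and r ≥ 2. If two occurrences of γ inside a common ambient word have a conflict-free overlap of size at least (r+1)·m, then the overlap is total (the occurrences coincide). Equivalently, γ is (r+1)·m-aligned. -/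
/-- A word `w` is `ℓ`-aligned if for every word `p` with `1 ≤ |p| ≤ |w| - ℓ`,
`w` is not a prefix of `p ++ w`. -/
def Aligned {A : Type*} (w : List A) (ℓ : ℕ) : Prop :=
  ∀ p : List A, 1 ≤ p.length → p.length ≤ w.length - ℓ → ¬ w <+: (p ++ w)

section Words

variable {A : Type*}

lemma wpow_add (w : List A) (a b : ℕ) : wpow w (a + b) = wpow w a ++ wpow w b := by
  induction a with
  | zero => simp [wpow]
  | succ a ih => rw [Nat.succ_add, wpow, wpow, ih, List.append_assoc]

lemma exists_wpow_of_append_comm (u v : List A) (h : u ++ v = v ++ u) :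
    ∃ (w : List A) (a b : ℕ), u = wpow w a ∧ v = wpow w b := by
  induction hn : u.length + v.length using Nat.strong_induction_on generalizing u v with
  | _ n ih =>
  rcases eq_or_ne u [] with rfl | hu
  · exact ⟨v, 0, 1, rfl, by simp [wpow]⟩
  rcases eq_or_ne v [] with rfl | hv
  · exact ⟨u, 1, 0, by simp [wpow], rfl⟩
  rcases List.append_eq_append_iff.mp h with ⟨v', rfl, hv'⟩ | ⟨u', rfl, hu'⟩
  · have hlt : u.length + v'.length < n := by
      have := List.length_pos_iff.mpr hu
      simp only [← hn, List.length_append]; omega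
    obtain ⟨w, a, b, rfl, rfl⟩ := ih _ hlt u v' hv' rfl
    exact ⟨w, a, a + b, rfl, (wpow_add w a b).symm⟩
  · have hlt : u'.length + v.length < n := by
      have := List.length_pos_iff.mpr hv
      simp only [← hn, List.length_append]; omega
    obtain ⟨w, a, b, rfl, rfl⟩ := ih _ hlt u' v hu'.symm rfl
    exact ⟨w, b + a, b, (wpow_add w b a).symm, rfl⟩

lemma Primitive.rotate_ne_self {L : List A} (hL : Primitive L) {s : ℕ} (hs₀ : 0 < s)
    (hs : s < L.length) : L.rotate s ≠ L := by
  intro h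
  rw [List.rotate_eq_drop_append_take hs.le] at h
  have hcomm : L.take s ++ L.drop s = L.drop s ++ L.take s := by
    rw [List.take_append_drop, h]
  obtain ⟨w, a, b, ha, hb⟩ := exists_wpow_of_append_comm _ _ hcomm
  have ha₀ : a ≠ 0 := by
    rintro rfl
    have := congrArg List.length ha
    simp only [List.length_take, wpow, List.length_nil] at this
    omega
  have hb₀ : b ≠ 0 := by
    rintro rfl
    have := congrArg List.length hb
    simp only [List.length_drop, wpow, List.length_nil] at this
    omega
  exact hL w (a + b) (by omega) (by rw [← List.take_append_drop s L, ha, hb, wpow_add])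

lemma take_length_drop_append_self (L : List A) {s : ℕ} (hs : s ≤ L.length) :
    ((L ++ L).drop s).take L.length = L.rotate s := by
  rw [List.drop_append_of_le_length hs, List.take_append, List.take_of_length_le (by simp),
    List.length_drop, Nat.sub_sub_self hs, List.rotate_eq_drop_append_take hs]

lemma drop_length_prefix_of_prefix_append {γ p : List A} (h : γ <+: p ++ γ) :
    γ.drop p.length <+: γ := by
  simpa using h.drop p.length

lemma List.IsPrefix.take_drop_eq {l₁ l₂ : List A} (h : l₁ <+: l₂) {i n : ℕ}
    (hin : i + n ≤ l₁.length) : (l₁.drop i).take n = (l₂.drop i).take n := by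
  rw [List.prefix_iff_eq_take.mp h, List.drop_take, List.take_take]
  congr 1; omega

section Blocks

variable {f : ℕ → List A} {m : ℕ}

lemma length_flatten_map_of_length_eq (hf : ∀ i, (f i).length = m) (l : List ℕ) :
    (l.map f).flatten.length = l.length * m := by
  have hlen : List.length ∘ f = fun _ => m := funext hf
  simp [hlen, List.map_const']

lemma take_drop_flatten_map_range (hf : ∀ i, (f i).length = m) {n i c : ℕ}
    (h : i + c ≤ n) :
    ((((List.range n).map f).flatten).drop (i * m)).take (c * m) =
      ((List.range' i c).map f).flatten := by
  have hsplit : List.range n =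
      List.range' 0 i ++ List.range' i c ++ List.range' (i + c) (n - (i + c)) := by
    rw [List.range_eq_range', ← Nat.add_sub_of_le h, ← List.range'_append_1,
      ← List.range'_append_1 (s := 0)]
    simp only [Nat.zero_add, Nat.add_sub_cancel_left]
  rw [hsplit, List.map_append, List.map_append, List.flatten_append, List.flatten_append,
    List.append_assoc, List.drop_left' (by simp [length_flatten_map_of_length_eq hf]),
    List.take_left' (by simp [length_flatten_map_of_length_eq hf])]

lemma eq_of_drop_mul_prefix (hf : ∀ i, (f i).length = m) {n k i : ℕ}
    (hper : (((List.range n).map f).flatten).drop (k * m) <+: ((List.range n).map f).flatten)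
    (hi : i + k < n) : f (i + k) = f i := by
  set γ := ((List.range n).map f).flatten
  have hγ : γ.length = n * m := by simp [γ, length_flatten_map_of_length_eq hf]
  have hblock : ∀ j, j < n → (γ.drop (j * m)).take m = f j := fun j hj => by
    simpa using take_drop_flatten_map_range hf (i := j) (c := 1) (by omega)
  have hbound : (i + 1) * m + k * m ≤ n * m := by rw [← Nat.add_mul]; gcongr; omega
  calc f (i + k) = (γ.drop ((i + k) * m)).take m := (hblock _ hi).symm
    _ = ((γ.drop (k * m)).drop (i * m)).take m := by
        rw [List.drop_drop, Nat.add_mul, Nat.add_comm]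
    _ = (γ.drop (i * m)).take m := hper.take_drop_eq <| by
        simp only [List.length_drop, hγ]; rw [Nat.add_mul] at hbound; omega
    _ = f i := hblock i (by omega)

lemma not_primitive_of_drop_mul_add_prefix (hf : ∀ i, (f i).length = m) {n k s i : ℕ}
    (hper : (((List.range n).map f).flatten).drop (k * m + s) <+:
      ((List.range n).map f).flatten)
    (hs₀ : 0 < s) (hs : s < m) (hi : i + k + 1 < n) (h₁ : f (i + k) = f i)
    (h₂ : f (i + k + 1) = f i) : ¬ Primitive (f i) := by
  set γ := ((List.range n).map f).flatten
  have hγ : γ.length = n * m := by simp [γ, length_flatten_map_of_length_eq hf]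
  have hblock : (γ.drop (i * m)).take m = f i := by
    simpa using take_drop_flatten_map_range hf (i := i) (c := 1) (by omega)
  have hpair : (γ.drop ((i + k) * m)).take (2 * m) = f i ++ f i := by
    simpa [List.range'_succ, h₁, h₂] using
      take_drop_flatten_map_range hf (i := i + k) (c := 2) (by omega)
  have hbound : (i + k + 2) * m ≤ n * m := by gcongr; omega
  intro hprim
  refine hprim.rotate_ne_self hs₀ (by rw [hf]; exact hs) ?_
  calc (f i).rotate s = ((f i ++ f i).drop s).take m := by
        rw [← hf i, take_length_drop_append_self _ (by rw [hf]; omega)]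
    _ = ((γ.drop ((i + k) * m)).drop s).take m := by
        rw [← hpair, List.drop_take, List.take_take, min_eq_left (by omega)]
    _ = ((γ.drop (k * m + s)).drop (i * m)).take m := by
        rw [List.drop_drop, List.drop_drop]; congr 2; ring
    _ = (γ.drop (i * m)).take m := hper.take_drop_eq <| by
        simp only [List.length_drop, hγ]; simp only [Nat.add_mul] at hbound; omega
    _ = f i := hblock

end Blocks

lemma flatten_map_range'_eq_wpow {f : ℕ → List A} {w : List A} {a n : ℕ}
    (h : ∀ i, a ≤ i → i < a + n → f i = w) :
    ((List.range' a n).map f).flatten = wpow w n := by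
  induction n generalizing a with
  | zero => rfl
  | succ n ih =>
    rw [List.range'_succ, List.map_cons, List.flatten_cons, wpow, h a le_rfl (by omega),
      ih fun i h₁ h₂ => h i (by omega) (by omega)]

section Gamma

variable (α β : List A) (r : ℕ)

def gammaBlock (i : ℕ) : List A :=
  if i < r ∨ 2 * r ≤ i ∧ i < 3 * r ∨ 4 * r ≤ i ∧ i < 6 * r then α else β

lemma gamma_eq_flatten_map_range :
    wpow α r ++ wpow β r ++ wpow α r ++ wpow β r ++ wpow α (2 * r) ++ wpow β (2 * r) =
      ((List.range (8 * r)).map (gammaBlock α β r)).flatten := by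
  have hrange : List.range (8 * r) = List.range' 0 (r + r + r + r + 2 * r + 2 * r) := by
    rw [List.range_eq_range']; congr 1; ring
  rw [hrange]
  simp only [← List.range'_append_1, List.map_append, List.flatten_append]
  rw [flatten_map_range'_eq_wpow (w := α), flatten_map_range'_eq_wpow (w := β),
    flatten_map_range'_eq_wpow (w := α), flatten_map_range'_eq_wpow (w := β),
    flatten_map_range'_eq_wpow (w := α), flatten_map_range'_eq_wpow (w := β)]
  all_goals intro i h₁ h₂; unfold gammaBlock; split_ifs <;> first | rfl | omega

lemma exists_gammaBlock_eq_alpha_add_eq_beta {k : ℕ} (hk₀ : 0 < k) (hk : k < 7 * r) :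
    ∃ i, i + k < 8 * r ∧ gammaBlock α β r i = α ∧ gammaBlock α β r (i + k) = β := by
  obtain ⟨i, hi⟩ : ∃ i, i < 6 * r ∧ 6 * r ≤ i + k ∧ i + k < 8 * r ∧
      (i < r ∨ 2 * r ≤ i ∧ i < 3 * r ∨ 4 * r ≤ i) := by
    rcases (by omega : k < 2 * r ∨ 2 * r ≤ k ∧ k < 4 * r ∨ 4 * r ≤ k ∧ k < 6 * r ∨
        6 * r ≤ k) with h | h | h | h
    exacts [⟨6 * r - 1, by omega⟩, ⟨4 * r, by omega⟩, ⟨2 * r, by omega⟩,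
      ⟨0, by omega⟩]
  refine ⟨i, hi.2.2.1, ?_, ?_⟩ <;> unfold gammaBlock
  · rw [if_pos (by omega)]
  · rw [if_neg (by omega)]

lemma exists_gammaBlock_add_eq_add_one_eq (hr : 2 ≤ r) {k : ℕ} (hk : k + 2 ≤ 7 * r) :
    ∃ i, i + k + 1 < 8 * r ∧ gammaBlock α β r (i + k) = gammaBlock α β r i ∧
      gammaBlock α β r (i + k + 1) = gammaBlock α β r i := by
  obtain ⟨i, hi⟩ : ∃ i,
      4 * r ≤ i ∧ i + k + 1 < 6 * r ∨
      2 * r ≤ i ∧ i < 3 * r ∧ 4 * r ≤ i + k ∧ i + k + 1 < 6 * r ∨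
      r ≤ i ∧ i < 2 * r ∧ 6 * r ≤ i + k ∧ i + k + 1 < 8 * r ∨
      3 * r ≤ i ∧ i < 4 * r ∧ 6 * r ≤ i + k ∧ i + k + 1 < 8 * r := by
    rcases (by omega : k + 2 ≤ 2 * r ∨ k + 1 = 2 * r ∨ 2 * r ≤ k ∧ k + 2 ≤ 4 * r ∨
        4 * r ≤ k + 1 ∧ k + 2 ≤ 5 * r ∨ k + 1 = 5 * r ∨ 5 * r ≤ k)
      with h | h | h | h | h | h
    exacts [⟨4 * r, by omega⟩, ⟨2 * r + 1, by omega⟩, ⟨2 * r, by omega⟩,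
      ⟨3 * r, by omega⟩, ⟨r + 1, by omega⟩, ⟨r, by omega⟩]
  refine ⟨i, by omega, ?_, ?_⟩ <;> unfold gammaBlock <;> split_ifs <;> first | rfl | omega

end Gamma

lemma gammaBlock_length {α β : List A} (r : ℕ) (hlen : α.length = β.length) (i : ℕ) :
    (gammaBlock α β r i).length = α.length := by
  unfold gammaBlock; split_ifs <;> simp [hlen]

lemma gammaBlock_primitive {α β : List A} (r : ℕ) (hα : Primitive α) (hβ : Primitive β)
    (i : ℕ) : Primitive (gammaBlock α β r i) := by
  unfold gammaBlock; split_ifs <;> assumption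

end Words

/-- The word `γ = α^r β^r α^r β^r α^{2r} β^{2r}`, for primitive `α ≠ β` of
equal length and `r ≥ 2`, is `(r+1)·|α|`-aligned: any conflict-free
self-overlap of size at least `(r+1)·|α|` is total. -/
theorem gamma_aligned {A : Type*} (α β : List A) (r : ℕ)
    (hα : Primitive α) (hβ : Primitive β) (hlen : α.length = β.length)
    (hne : α ≠ β) (hr : 2 ≤ r) :
    Aligned (wpow α r ++ wpow β r ++ wpow α r ++ wpow β r ++
      wpow α (2 * r) ++ wpow β (2 * r)) ((r + 1) * α.length) := by
  intro p hp₁ hp₂ hpre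
  rw [gamma_eq_flatten_map_range] at hp₂ hpre
  have hf := gammaBlock_length r hlen
  have hq : p.length ≤ (7 * r - 1) * α.length := by
    rwa [length_flatten_map_of_length_eq hf, List.length_range, ← Nat.sub_mul,
      show 8 * r - (r + 1) = 7 * r - 1 by omega] at hp₂
  have hm : 0 < α.length := Nat.pos_of_ne_zero fun h => by rw [h, Nat.mul_zero] at hq; omega
  obtain ⟨k, s, hs, hks⟩ : ∃ k s, s < α.length ∧ p.length = k * α.length + s :=
    ⟨_, _, Nat.mod_lt _ hm, (Nat.div_add_mod' _ _).symm⟩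
  have hper := drop_length_prefix_of_prefix_append hpre
  rw [hks] at hper hq hp₁
  rcases Nat.eq_zero_or_pos s with rfl | hs₀
  · have hk : k < 7 * r := Nat.lt_of_mul_lt_mul_right (hq.trans_lt (by gcongr; omega))
    obtain ⟨i, hi, hiα, hiβ⟩ := exists_gammaBlock_eq_alpha_add_eq_beta α β r
      (Nat.pos_of_ne_zero (by rintro rfl; simp at hp₁)) hk
    exact hne (hiα.symm.trans ((eq_of_drop_mul_prefix hf hper hi).symm.trans hiβ))
  · have hk : k + 2 ≤ 7 * r := by
      have := Nat.lt_of_mul_lt_mul_right (a := α.length)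
        (by omega : k * α.length < (7 * r - 1) * α.length)
      omega
    obtain ⟨i, hi, h₁, h₂⟩ := exists_gammaBlock_add_eq_add_one_eq α β r hr hk
    exact not_primitive_of_drop_mul_add_prefix hf hper hs₀ hs hi h₁ h₂
      (gammaBlock_primitive r hα hβ i)
end
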